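/- arXiv:2005.13320 — 2 statements merged into one kernel-verified Lean document; each statement's English description precedes it below -/
import Mathlib

section
/- Let G be a rooted graph with root r that satisfies the rooted triangle condition. Then every daisy graph of G with respect to r is an isometric subgraph of G if and only if for any two vertices u and v of G there exists a pseudo-median of the triple (u, v, r) of size 0 or 1. -/
open SimpleGraph

namespace Daisy

variable {V : Type*}

/-- The interval `I_G(u,v)`: vertices lying on shortest `u,v`-paths. -/
def interval (G : SimpleGraph V) (u v : V) : Set V :=
  {x | G.dist u x + G.dist x v = G.dist u v}

/-- The vertex set of the daisy graph of `G` with respect to the root `r`, generated by `X`. -/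
def daisySet (G : SimpleGraph V) (r : V) (X : Set V) : Set V :=
  ⋃ v ∈ X, interval G r v

/-- The subgraph of `G` induced by `S` is an isometric subgraph of `G`. -/
def IsIsometricSubset (G : SimpleGraph V) (S : Set V) : Prop :=
  ∀ u v : S, (G.induce S).dist u v = G.dist u.1 v.1

/-- Some shortest `u,v`-path of `G` contains both `x` and `y`. -/
def OnShortestPath (G : SimpleGraph V) (u v x y : V) : Prop :=
  ∃ p : G.Walk u v, p.length = G.dist u v ∧ x ∈ p.support ∧ y ∈ p.support

/-- Conditions 1 and 2 of the definition of a pseudo-median `(x,y,z)` of the triple `(u,v,w)`. -/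
def PseudoMedianConds (G : SimpleGraph V) (u v w x y z : V) : Prop :=
  OnShortestPath G u v x y ∧ OnShortestPath G v w y z ∧ OnShortestPath G u w x z ∧
  G.dist x y = G.dist y z ∧ G.dist y z = G.dist x z

/-- `(x,y,z)` is a pseudo-median of the triple `(u,v,w)` in `G`:
it satisfies the path and equidistance conditions, and `d(x,y)` is minimal under them. -/
def IsPseudoMedian (G : SimpleGraph V) (u v w x y z : V) : Prop :=
  PseudoMedianConds G u v w x y z ∧
  ∀ x' y' z' : V, PseudoMedianConds G u v w x' y' z' → G.dist x y ≤ G.dist x' y'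

/-- The triple `(u,v,w)` has a pseudo-median of size `s` in `G`. -/
def HasPseudoMedianOfSize (G : SimpleGraph V) (u v w : V) (s : ℕ) : Prop :=
  ∃ x y z : V, IsPseudoMedian G u v w x y z ∧ G.dist x y = s

/-- The rooted triangle condition for a rooted graph `G` with root `r`. -/
def RootedTriangleCondition (G : SimpleGraph V) (r : V) : Prop :=
  ∀ v w : V, G.Adj v w → G.dist r v = G.dist r w → 2 ≤ G.dist r v →
    ∃ x : V, G.Adj x v ∧ G.Adj x w ∧ G.dist r x + 1 = G.dist r v

/-!
A geodesic from `u` to `v` lies in the daisy graph `G_r({u,v}) = I(r,u) ∪ I(r,v)` exactly when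
some geodesic passes from `I(r,u)` to `I(r,v)` through a single vertex or edge `xy`, and such
crossings for all pairs make every daisy graph isometric, because `I(r,u) ⊆ G_r(X)` whenever
`u ∈ G_r(X)`. It remains to compare crossings with pseudo-medians of `(u,v,r)` of size at most
one. A crossing at a vertex, or at an edge whose ends lie on different levels, is a median; an
edge `xy` with `d(r,x) = d(r,y)` becomes the pseudo-median `(x,y,z)` with the common neighbour
`z` one level lower given by the rooted triangle condition. Conversely the pair `x,y` of a
pseudo-median of size at most one is a crossing.
-/

variable {G : SimpleGraph V} {r u v w x y z : V}

section Interval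

lemma mem_interval_iff : x ∈ interval G u v ↔ G.dist u x + G.dist x v = G.dist u v := Iff.rfl

lemma left_mem_interval : u ∈ interval G u v := by
  simp [mem_interval_iff]

lemma right_mem_interval : v ∈ interval G u v := by
  simp [mem_interval_iff]

lemma interval_comm (u v : V) : interval G u v = interval G v u := by
  ext x
  rw [mem_interval_iff, mem_interval_iff, dist_comm (u := v) (v := x), dist_comm (u := x) (v := u),
    dist_comm (u := v) (v := u), add_comm]

lemma interval_subset_of_mem_left (hG : G.Connected) (hx : x ∈ interval G u v) :
    interval G u x ⊆ interval G u v := by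
  intro w hw
  rw [mem_interval_iff] at *
  have := hG.dist_triangle (u := w) (v := x) (w := v)
  have := hG.dist_triangle (u := u) (v := w) (w := v)
  omega

lemma interval_subset_of_mem_right (hG : G.Connected) (hx : x ∈ interval G u v) :
    interval G x v ⊆ interval G u v := by
  rw [interval_comm x, interval_comm u] at *
  exact interval_subset_of_mem_left hG hx

lemma interval_subset_pair_of_dist_le_one (hG : G.Connected) (h : G.dist x y ≤ 1) :
    interval G x y ⊆ {x, y} := by
  intro w hw
  rw [mem_interval_iff] at hw
  rcases (by omega : G.dist x w = 0 ∨ G.dist w y = 0) with h0 | h0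
  · exact .inl (hG.dist_eq_zero_iff.mp h0).symm
  · exact .inr (hG.dist_eq_zero_iff.mp h0)

end Interval

section Geodesic

lemma mem_interval_of_mem_support {p : G.Walk u v} (hp : p.length = G.dist u v)
    (hx : x ∈ p.support) : x ∈ interval G u v := by
  obtain ⟨q, s, rfl⟩ := Walk.mem_support_iff_exists_append.mp hx
  have hq := length_eq_dist_of_subwalk hp (Walk.isSubwalk_of_append_left rfl)
  have hs := length_eq_dist_of_subwalk hp (Walk.isSubwalk_of_append_right rfl)
  rw [Walk.length_append] at hp
  rw [mem_interval_iff]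
  omega

lemma exists_walk_through (hG : G.Connected)
    (h : G.dist u x + G.dist x y + G.dist y v = G.dist u v) :
    ∃ p : G.Walk u v, p.length = G.dist u v ∧ x ∈ p.support ∧ y ∈ p.support ∧
      ∀ w ∈ p.support, w ∈ interval G u x ∪ interval G x y ∪ interval G y v := by
  obtain ⟨p₁, hp₁⟩ := hG.exists_walk_length_eq_dist u x
  obtain ⟨p₂, hp₂⟩ := hG.exists_walk_length_eq_dist x y
  obtain ⟨p₃, hp₃⟩ := hG.exists_walk_length_eq_dist y v
  refine ⟨p₁.append (p₂.append p₃), by simp [hp₁, hp₂, hp₃, ← h, add_assoc], by simp,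
    by simp, fun w hw => ?_⟩
  simp only [Walk.mem_support_append_iff] at hw
  rcases hw with hw | hw | hw
  · exact .inl (.inl (mem_interval_of_mem_support hp₁ hw))
  · exact .inl (.inr (mem_interval_of_mem_support hp₂ hw))
  · exact .inr (mem_interval_of_mem_support hp₃ hw)

lemma onShortestPath_of_dist_add_dist_add_dist (hG : G.Connected)
    (h : G.dist u x + G.dist x y + G.dist y v = G.dist u v) : OnShortestPath G u v x y :=
  let ⟨p, hp, hx, hy, _⟩ := exists_walk_through hG h
  ⟨p, hp, hx, hy⟩

lemma OnShortestPath.mem_interval_left (h : OnShortestPath G u v x y) : x ∈ interval G u v :=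
  let ⟨_, hp, hx, _⟩ := h
  mem_interval_of_mem_support hp hx

lemma OnShortestPath.mem_interval_right (h : OnShortestPath G u v x y) : y ∈ interval G u v :=
  let ⟨_, hp, _, hy⟩ := h
  mem_interval_of_mem_support hp hy

lemma OnShortestPath.dist_add_dist_add_dist_or (h : OnShortestPath G u v x y) :
    G.dist u x + G.dist x y + G.dist y v = G.dist u v ∨
      G.dist u y + G.dist y x + G.dist x v = G.dist u v := by
  obtain ⟨p, hp, hx, hy⟩ := h
  obtain ⟨q, s, rfl⟩ := Walk.mem_support_iff_exists_append.mp hx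
  have hq := length_eq_dist_of_subwalk hp (Walk.isSubwalk_of_append_left rfl)
  have hs := length_eq_dist_of_subwalk hp (Walk.isSubwalk_of_append_right rfl)
  rw [Walk.length_append] at hp
  rcases (Walk.mem_support_append_iff q s).mp hy with hy | hy
  · have := mem_interval_of_mem_support hq hy
    rw [mem_interval_iff] at this
    omega
  · have := mem_interval_of_mem_support hs hy
    rw [mem_interval_iff] at this
    omega

end Geodesic

section Isometric

lemma _root_.SimpleGraph.Reachable.dist_map_le {V' : Type*} {G' : SimpleGraph V'} (f : G →g G')
    (h : G.Reachable u v) : G'.dist (f u) (f v) ≤ G.dist u v := by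
  obtain ⟨p, hp⟩ := h.exists_walk_length_eq_dist
  simpa [hp] using dist_le (p.map f)

lemma isIsometricSubset_iff_exists_walk (hG : G.Connected) {S : Set V} :
    IsIsometricSubset G S ↔
      ∀ u ∈ S, ∀ v ∈ S, ∃ p : G.Walk u v, p.length = G.dist u v ∧ ∀ w ∈ p.support, w ∈ S := by
  constructor
  · intro h u hu v hv
    have e : (G.induce S).dist ⟨u, hu⟩ ⟨v, hv⟩ = G.dist u v := h ⟨u, hu⟩ ⟨v, hv⟩
    obtain ⟨q, hq⟩ : ∃ q : (G.induce S).Walk ⟨u, hu⟩ ⟨v, hv⟩, q.length = G.dist u v := by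
      by_cases huv : u = v
      · subst huv
        exact ⟨.nil, by simp⟩
      · rw [← e]
        exact exists_walk_of_dist_ne_zero (e ▸ (hG.pos_dist_of_ne huv).ne')
    have hS : ∀ w ∈ (q.map (Embedding.induce S).toHom).support, w ∈ S := by
      intro w hw
      rw [Walk.support_map, List.mem_map] at hw
      obtain ⟨w', -, rfl⟩ := hw
      exact w'.2
    exact ⟨q.map (Embedding.induce S).toHom, (Walk.length_map _ _).trans hq, hS⟩
  · intro h u v
    obtain ⟨p, hp, hS⟩ := h u u.2 v v.2
    have hlen : (p.induce S hS).length = p.length := by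
      rw [← Walk.length_map (Embedding.induce S).toHom, Walk.map_induce]
      rfl
    refine le_antisymm (hp ▸ hlen ▸ dist_le (p.induce S hS)) ?_
    exact (p.induce S hS).reachable.dist_map_le (Embedding.induce S).toHom

lemma daisySet_pair : daisySet G r {u, v} = interval G r u ∪ interval G r v := by
  simp [daisySet]

lemma interval_subset_daisySet (hG : G.Connected) {X : Set V} (hu : u ∈ daisySet G r X) :
    interval G r u ⊆ daisySet G r X := by
  simp only [daisySet, Set.mem_iUnion] at hu
  obtain ⟨a, ha, hu⟩ := hu
  exact (interval_subset_of_mem_left hG hu).trans (Set.subset_biUnion_of_mem ha)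

end Isometric

section Crossing

/-- Some geodesic from `u` to `v` steps from `I(r,u)` to `I(r,v)` at a vertex `x = y` or across
an edge `xy`. -/
def HasGeodesicCrossing (G : SimpleGraph V) (r u v : V) : Prop :=
  ∃ x ∈ interval G r u, ∃ y ∈ interval G r v,
    G.dist x y ≤ 1 ∧ G.dist u x + G.dist x y + G.dist y v = G.dist u v

lemma hasGeodesicCrossing_of_walk (hG : G.Connected) {a : V} (p : G.Walk a v)
    (ha : a ∈ interval G r u) (hp : G.dist u a + p.length = G.dist u v)
    (hS : ∀ w ∈ p.support, w ∈ interval G r u ∪ interval G r v) :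
    HasGeodesicCrossing G r u v := by
  induction p with
  | nil => exact ⟨_, ha, _, right_mem_interval, by simp, by simp⟩
  | @cons a c v hadj p ih =>
    have hac : G.dist a c = 1 := dist_eq_one_iff_adj.mpr hadj
    have := hG.dist_triangle (u := u) (v := a) (w := c)
    have := hG.dist_triangle (u := u) (v := c) (w := v)
    have := dist_le p
    rw [Walk.length_cons] at hp
    by_cases hc : c ∈ interval G r u
    · exact ih hc (by omega) fun w hw => hS w (by simp [hw])
    · have hcv : c ∈ interval G r v := (hS c (by simp)).resolve_left hc
      exact ⟨a, ha, c, hcv, hac.le, by omega⟩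

lemma hasGeodesicCrossing_of_isIsometricSubset (hG : G.Connected)
    (h : IsIsometricSubset G (daisySet G r {u, v})) : HasGeodesicCrossing G r u v := by
  rw [isIsometricSubset_iff_exists_walk hG, daisySet_pair] at h
  obtain ⟨p, hp, hS⟩ := h u (.inl right_mem_interval) v (.inr right_mem_interval)
  exact hasGeodesicCrossing_of_walk hG p right_mem_interval (by simp [hp]) hS

lemma isIsometricSubset_daisySet (hG : G.Connected) (h : ∀ u v, HasGeodesicCrossing G r u v)
    (X : Set V) : IsIsometricSubset G (daisySet G r X) := by
  refine (isIsometricSubset_iff_exists_walk hG).mpr fun u hu v hv => ?_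
  obtain ⟨x, hx, y, hy, hxy, hd⟩ := h u v
  obtain ⟨p, hp, -, -, hS⟩ := exists_walk_through hG hd
  have hux : interval G u x ⊆ daisySet G r X := by
    rw [interval_comm]
    exact (interval_subset_of_mem_right hG hx).trans (interval_subset_daisySet hG hu)
  have hyv : interval G y v ⊆ daisySet G r X :=
    (interval_subset_of_mem_right hG hy).trans (interval_subset_daisySet hG hv)
  refine ⟨p, hp, fun w hw => ?_⟩
  rcases hS w hw with (hw | hw) | hw
  · exact hux hw
  · rcases interval_subset_pair_of_dist_le_one hG hxy hw with rfl | rfl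
    exacts [hux right_mem_interval, hyv left_mem_interval]
  · exact hyv hw

theorem forall_isIsometricSubset_daisySet_iff (hG : G.Connected) :
    (∀ X, IsIsometricSubset G (daisySet G r X)) ↔ ∀ u v, HasGeodesicCrossing G r u v :=
  ⟨fun h _ _ => hasGeodesicCrossing_of_isIsometricSubset hG (h _), isIsometricSubset_daisySet hG⟩

end Crossing

section PseudoMedian

lemma exists_isPseudoMedian_dist_le (h : PseudoMedianConds G u v w x y z) :
    ∃ x' y' z', IsPseudoMedian G u v w x' y' z' ∧ G.dist x' y' ≤ G.dist x y := by
  classical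
  have hex : ∃ n, ∃ x y z, PseudoMedianConds G u v w x y z ∧ G.dist x y = n :=
    ⟨_, x, y, z, h, rfl⟩
  obtain ⟨x', y', z', h', hn⟩ := Nat.find_spec hex
  exact ⟨x', y', z', ⟨h', fun a b c habc => hn ▸ Nat.find_min' hex ⟨a, b, c, habc, rfl⟩⟩,
    hn ▸ Nat.find_min' hex ⟨x, y, z, h, rfl⟩⟩

lemma hasPseudoMedianOfSize_zero_or_one_iff :
    HasPseudoMedianOfSize G u v w 0 ∨ HasPseudoMedianOfSize G u v w 1 ↔
      ∃ x y z, PseudoMedianConds G u v w x y z ∧ G.dist x y ≤ 1 := by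
  constructor
  · rintro (⟨x, y, z, h, hs⟩ | ⟨x, y, z, h, hs⟩) <;> exact ⟨x, y, z, h.1, by omega⟩
  · rintro ⟨x, y, z, h, hs⟩
    obtain ⟨x', y', z', h', hle⟩ := exists_isPseudoMedian_dist_le h
    rcases Nat.le_one_iff_eq_zero_or_eq_one.mp (hle.trans hs) with h0 | h1
    exacts [.inl ⟨x', y', z', h', h0⟩, .inr ⟨x', y', z', h', h1⟩]

lemma pseudoMedianConds_self (hG : G.Connected) (huv : x ∈ interval G u v)
    (hvw : x ∈ interval G v w) (huw : x ∈ interval G u w) : PseudoMedianConds G u v w x x x := by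
  rw [mem_interval_iff] at huv hvw huw
  refine ⟨onShortestPath_of_dist_add_dist_add_dist hG ?_,
    onShortestPath_of_dist_add_dist_add_dist hG ?_,
    onShortestPath_of_dist_add_dist_add_dist hG ?_, rfl, rfl⟩ <;> simpa

lemma RootedTriangleCondition.exists_adj_adj (hG : G.Connected)
    (htc : RootedTriangleCondition G r) (hxy : G.Adj x y) (hd : G.dist r x = G.dist r y) :
    ∃ z, G.Adj z x ∧ G.Adj z y ∧ G.dist r z + 1 = G.dist r x := by
  rcases lt_or_ge 1 (G.dist r x) with h2 | h1
  · exact htc x y hxy hd h2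
  · have hx0 : G.dist r x ≠ 0 := fun h0 =>
      hxy.ne ((hG.dist_eq_zero_iff.mp h0).symm.trans (hG.dist_eq_zero_iff.mp (hd ▸ h0)))
    refine ⟨r, dist_eq_one_iff_adj.mp (by omega), dist_eq_one_iff_adj.mp (by omega), ?_⟩
    simp only [dist_self]
    omega

lemma HasGeodesicCrossing.exists_pseudoMedianConds (hG : G.Connected)
    (htc : RootedTriangleCondition G r) (h : HasGeodesicCrossing G r u v) :
    ∃ x y z, PseudoMedianConds G u v r x y z ∧ G.dist x y ≤ 1 := by
  obtain ⟨x, hx, y, hy, hxy, hd⟩ := h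
  have huv := onShortestPath_of_dist_add_dist_add_dist hG hd
  have hrx := hG.dist_triangle (u := r) (v := y) (w := x)
  have hry := hG.dist_triangle (u := r) (v := x) (w := y)
  rw [dist_comm (u := y)] at hrx
  rcases (by omega : G.dist r x + G.dist x y = G.dist r y ∨ G.dist r y + G.dist x y = G.dist r x ∨
      (G.dist r x = G.dist r y ∧ G.dist x y = 1)) with hxm | hym | ⟨hlev, h1⟩
  · have hxv : x ∈ interval G r v := interval_subset_of_mem_left hG hy hxm
    refine ⟨x, x, x, pseudoMedianConds_self hG huv.mem_interval_left ?_ ?_, by simp⟩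
    exacts [interval_comm r v ▸ hxv, interval_comm r u ▸ hx]
  · have hyx : y ∈ interval G r x := by rwa [mem_interval_iff, dist_comm (u := y)]
    have hyu : y ∈ interval G r u := interval_subset_of_mem_left hG hx hyx
    refine ⟨y, y, y, pseudoMedianConds_self hG huv.mem_interval_right ?_ ?_, by simp⟩
    exacts [interval_comm r v ▸ hy, interval_comm r u ▸ hyu]
  · obtain ⟨z, hzx, hzy, hz⟩ := htc.exists_adj_adj hG (dist_eq_one_iff_adj.mp h1) hlev
    have hxz : G.dist x z = 1 := dist_eq_one_iff_adj.mpr hzx.symm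
    have hyz : G.dist y z = 1 := dist_eq_one_iff_adj.mpr hzy.symm
    rw [mem_interval_iff] at hx hy
    refine ⟨x, y, z, ⟨huv, onShortestPath_of_dist_add_dist_add_dist hG ?_,
      onShortestPath_of_dist_add_dist_add_dist hG ?_, by omega, by omega⟩, h1.le⟩
    · rw [dist_comm (u := v) (v := y), dist_comm (u := z) (v := r), dist_comm (u := v) (v := r)]
      omega
    · rw [dist_comm (u := u) (v := x), dist_comm (u := z) (v := r), dist_comm (u := u) (v := r)]
      omega

lemma hasGeodesicCrossing_of_pseudoMedianConds (hG : G.Connected)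
    (h : PseudoMedianConds G u v r x y z) (hxy : G.dist x y ≤ 1) : HasGeodesicCrossing G r u v := by
  obtain ⟨huv, hvr, hur, hxy_yz, hyz_xz⟩ := h
  refine ⟨x, interval_comm r u ▸ hur.mem_interval_left,
    y, interval_comm r v ▸ hvr.mem_interval_left, hxy, ?_⟩
  rcases huv.dist_add_dist_add_dist_or with hgood | hbad
  · exact hgood
  -- If `y` preceded `x` at distance one, `z` would precede `x` on the `u,r`-geodesic and `y` on
  -- the `v,r`-geodesic, and then `d(u,z) + d(z,v) < d(u,v)`.
  have := hvr.dist_add_dist_add_dist_or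
  have := hur.dist_add_dist_add_dist_or
  have := hG.dist_triangle (u := u) (v := x) (w := v)
  have := hG.dist_triangle (u := u) (v := y) (w := x)
  have := hG.dist_triangle (u := y) (v := x) (w := v)
  have := hG.dist_triangle (u := u) (v := y) (w := v)
  have := hG.dist_triangle (u := u) (v := z) (w := r)
  have := hG.dist_triangle (u := u) (v := y) (w := z)
  have := hG.dist_triangle (u := v) (v := z) (w := r)
  have := hG.dist_triangle (u := v) (v := x) (w := z)
  have := hG.dist_triangle (u := u) (v := x) (w := r)
  have := hG.dist_triangle (u := v) (v := y) (w := r)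
  have := hG.dist_triangle (u := u) (v := z) (w := v)
  have := dist_comm (G := G) (u := x) (v := y)
  have := dist_comm (G := G) (u := y) (v := z)
  have := dist_comm (G := G) (u := x) (v := z)
  have := dist_comm (G := G) (u := y) (v := v)
  have := dist_comm (G := G) (u := x) (v := v)
  have := dist_comm (G := G) (u := z) (v := v)
  omega

lemma hasGeodesicCrossing_iff_exists_pseudoMedianConds (hG : G.Connected)
    (htc : RootedTriangleCondition G r) :
    HasGeodesicCrossing G r u v ↔ ∃ x y z, PseudoMedianConds G u v r x y z ∧ G.dist x y ≤ 1 :=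
  ⟨(·.exists_pseudoMedianConds hG htc),
    fun ⟨_, _, _, h, hxy⟩ => hasGeodesicCrossing_of_pseudoMedianConds hG h hxy⟩

end PseudoMedian

/-- Let `G` be a connected rooted graph with root `r` satisfying the rooted
triangle condition. Every daisy graph of `G` with respect to `r` is isometric in `G` iff for
any two vertices `u`, `v` the triple `(u,v,r)` has a pseudo-median of size 0 or 1. -/
theorem all_daisy_isometric_iff_pseudoMedian
    (G : SimpleGraph V) (hconn : G.Connected) (r : V)
    (htc : RootedTriangleCondition G r) :
    (∀ X : Set V, IsIsometricSubset G (daisySet G r X)) ↔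
      (∀ u v : V,
        HasPseudoMedianOfSize G u v r 0 ∨ HasPseudoMedianOfSize G u v r 1) := by
  simp only [forall_isIsometricSubset_daisySet_iff hconn, hasPseudoMedianOfSize_zero_or_one_iff,
    hasGeodesicCrossing_iff_exists_pseudoMedianConds hconn htc]

end Daisy
end

section
/- Let H = H_{k_1,…,k_n} be a Hamming graph with root 0^n and let G be an isometric daisy graph of H with respect to 0^n. Then any daisy peripheral expansion of G relative to sets W_0 = V(G), W_1, …, W_l (where each ⟨W_i⟩ is a daisy graph of H with respect to 0^n) is an isometric daisy graph of the Hamming graph H' = K_{l+1} □ H with respect to 0^{n+1}. -/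
open SimpleGraph

namespace Daisy

variable {V : Type*}

/-- The Hamming graph with factors `K_{k i}`: vertices are tuples, two vertices being
adjacent iff they differ in exactly one coordinate. -/
def hammingGraph {ι : Type*} (k : ι → ℕ) : SimpleGraph (∀ i, Fin (k i)) where
  Adj u v := ∃! i, u i ≠ v i
  symm := by
    constructor
    rintro u v ⟨i, hi, hu⟩
    exact ⟨i, Ne.symm hi, fun j hj => hu j (Ne.symm hj)⟩
  loopless := by
    constructor
    rintro u ⟨i, hi, -⟩
    exact hi rfl

/-- The all-zeros vertex `0^n` of a Hamming graph. -/
def hroot {ι : Type*} (k : ι → ℕ) (hk : ∀ i, 0 < k i) : ∀ i, Fin (k i) :=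
  fun i => ⟨0, hk i⟩

/-- `S` is the vertex set of a daisy graph of `G` with respect to the root `r`. -/
def IsDaisySet (G : SimpleGraph V) (r : V) (S : Set V) : Prop :=
  ∃ X : Set V, S = daisySet G r X

/-- `G` is (isomorphic to) an isometric daisy graph of `H` with respect to the root `r`. -/
def IsIsometricDaisyGraphOf {U : Type*} (G : SimpleGraph U) (H : SimpleGraph V) (r : V) : Prop :=
  ∃ S : Set V, IsDaisySet H r S ∧ IsIsometricSubset H S ∧ Nonempty (G ≃g H.induce S)

/-- The family `W` of subsets of `V(G)` satisfies the conditions of Chepoi's definition of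
an expansion: pairwise intersecting, covering, no edges between `W i \\ W j` and `W j \\ W i`,
and the subgraphs induced by `W i` and by `W i ∪ W j` are isometric in `G`. -/
def ExpansionFamily (G : SimpleGraph V) {m : ℕ} (W : Fin m → Set V) : Prop :=
  (∀ i j, (W i ∩ W j).Nonempty) ∧
  (⋃ i, W i) = Set.univ ∧
  (∀ i j, ∀ x ∈ W i \ W j, ∀ y ∈ W j \ W i, ¬ G.Adj x y) ∧
  (∀ i, IsIsometricSubset G (W i)) ∧
  (∀ i j, IsIsometricSubset G (W i ∪ W j))

/-- The expansion of `G` relative to the family `W`: each vertex `x` is replaced by a clique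
on the indices `i` with `x ∈ W i`, and copies with equal index of adjacent vertices are joined. -/
def expansionGraph (G : SimpleGraph V) {m : ℕ} (W : Fin m → Set V) :
    SimpleGraph {p : Fin m × V // p.2 ∈ W p.1} where
  Adj p q := (p.1.1 = q.1.1 ∧ G.Adj p.1.2 q.1.2) ∨ (p.1.1 ≠ q.1.1 ∧ p.1.2 = q.1.2)
  symm := by
    constructor
    rintro p q (⟨h1, h2⟩ | ⟨h1, h2⟩)
    · exact Or.inl ⟨h1.symm, h2.symm⟩
    · exact Or.inr ⟨Ne.symm h1, h2.symm⟩
  loopless := by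
    constructor
    rintro p (⟨-, h⟩ | ⟨h, -⟩)
    · exact G.loopless.irrefl _ h
    · exact h rfl

/-!
The copy `x_i` of a vertex `x` of the expansion is placed at `(i, x)` in `K_{l+1} □ H`, which
identifies the expansion with the subgraph induced by `{(i, x) | x ∈ W_i}`. The interval from
`(0, 0^n)` to `(i, v)` is `{0, i} × I(0^n, v)`; as `W_0 = V(G)` contains every `W_i`, the pairs
`(i, v)` with `v` a generator of `W_i` generate this set as a daisy set. Distances in the product
are `[i ≠ j] + d_H(x, y)`. Within a layer, the isometry of `W_i` and of `S` realises them. Between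
layers `i ≠ j`, a geodesic of `⟨W_i ∪ W_j⟩` from `x` to `y` meets `W_i ∩ W_j` in some `z` just before
it first leaves `W_i`, since no edge joins `W_i ∖ W_j` to `W_j ∖ W_i`; going from `x` to `z` in
layer `i`, over to layer `j`, and on to `y` costs `d(x, y) + 1`.
-/

section Metric

variable {U α β : Type*} {G : SimpleGraph V}

lemma dist_map_le_length {G' : SimpleGraph U} (f : G →g G') {u v : V} (p : G.Walk u v) :
    G'.dist (f u) (f v) ≤ p.length :=
  (dist_le (p.map f)).trans_eq (Walk.length_map f p)

lemma IsIsometricSubset.preconnected_induce {s : Set V} (hG : G.Preconnected)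
    (hs : IsIsometricSubset G s) : (G.induce s).Preconnected := by
  intro u v
  rcases eq_or_ne u v with rfl | huv
  · rfl
  · apply Reachable.of_dist_ne_zero
    rw [hs]
    exact ((hG u v).pos_dist_of_ne (Subtype.coe_injective.ne huv)).ne'

lemma isIsometricSubset_of_exists_walk {s : Set V}
    (h : ∀ u v : s, ∃ p : (G.induce s).Walk u v, p.length ≤ G.dist u.1 v.1) :
    IsIsometricSubset G s := by
  intro u v
  obtain ⟨p, hp⟩ := h u v
  obtain ⟨q, hq⟩ := p.reachable.exists_walk_length_eq_dist
  exact le_antisymm ((dist_le p).trans hp) (hq ▸ dist_map_le_length (Embedding.induce s).toHom q)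

lemma dist_boxProd {G : SimpleGraph α} {H : SimpleGraph β} (hG : G.Preconnected)
    (hH : H.Preconnected) (x y : α × β) :
    (G □ H).dist x y = G.dist x.1 y.1 + H.dist x.2 y.2 := by
  have h := edist_boxProd (G := G) (H := H) x y
  rw [← (reachable_boxProd.2 ⟨hG _ _, hH _ _⟩).coe_dist_eq_edist,
    ← (hG _ _).coe_dist_eq_edist, ← (hH _ _).coe_dist_eq_edist] at h
  exact_mod_cast h

lemma interval_boxProd {G : SimpleGraph α} {H : SimpleGraph β} (hG : G.Preconnected)
    (hH : H.Preconnected) (u v : α × β) :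
    interval (G □ H) u v = interval G u.1 v.1 ×ˢ interval H u.2 v.2 := by
  ext ⟨a, b⟩
  have hG' := (hG u.1 a).dist_triangle_left v.1
  have hH' := (hH u.2 b).dist_triangle_left v.2
  simp only [interval, Set.mem_ofPred_eq, Set.mem_prod, dist_boxProd hG hH]
  omega

lemma interval_top [DecidableEq α] (a b : α) : interval (⊤ : SimpleGraph α) a b = {a, b} := by
  ext x
  simp only [interval, Set.mem_ofPred_eq, Set.mem_insert_iff, Set.mem_singleton_iff, dist_top]
  split_ifs <;> grind

end Metric

section Hamming

variable {ι : Type*} {k : ι → ℕ}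

lemma hammingGraph_adj_update [DecidableEq ι] {u : ∀ i, Fin (k i)} {i : ι} {a : Fin (k i)}
    (h : u i ≠ a) : (hammingGraph k).Adj u (Function.update u i a) := by
  refine ⟨i, by simpa using h, fun j hj => ?_⟩
  by_contra hji
  exact hj (Function.update_of_ne hji a u).symm

lemma hammingGraph_preconnected [Fintype ι] : (hammingGraph k).Preconnected := by
  classical
  intro u v
  suffices h : ∀ s : Finset ι, ∀ u, (∀ i ∉ s, u i = v i) → (hammingGraph k).Reachable u v from
    h Finset.univ u (by simp)
  intro s
  induction s using Finset.induction_on with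
  | empty => exact fun u hu => funext (fun i => hu i (Finset.notMem_empty i)) ▸ .rfl
  | insert i s hi ih =>
    intro u hu
    have hstep : (hammingGraph k).Reachable u (Function.update u i (v i)) := by
      by_cases h : u i = v i
      · rw [← h, Function.update_eq_self]
      · exact (hammingGraph_adj_update h).reachable
    refine hstep.trans (ih _ fun j hj => ?_)
    rcases eq_or_ne j i with rfl | hji
    · simp
    · rw [Function.update_of_ne hji]
      exact hu j (by simp [hji, hj])

end Hamming

section Expansion

variable {G : SimpleGraph V} {m : ℕ} {W : Fin m → Set V}

def layerHom (G : SimpleGraph V) (W : Fin m → Set V) (i : Fin m) :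
    G.induce (W i) →g expansionGraph G W where
  toFun x := ⟨(i, x.1), x.2⟩
  map_rel' h := Or.inl ⟨rfl, h⟩

lemma exists_layer_walk_length_eq (hG : G.Preconnected) {i : Fin m} (hW : IsIsometricSubset G (W i))
    {x y : V} (hx : x ∈ W i) (hy : y ∈ W i) :
    ∃ p : (expansionGraph G W).Walk ⟨(i, x), hx⟩ ⟨(i, y), hy⟩, p.length = G.dist x y := by
  obtain ⟨q, hq⟩ := (hW.preconnected_induce hG ⟨x, hx⟩ ⟨y, hy⟩).exists_walk_length_eq_dist
  exact ⟨q.map (layerHom G W i), (Walk.length_map _ _).trans (hq.trans (hW _ _))⟩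

lemma exists_mem_inter_dist_add_dist_le (hG : G.Preconnected) {A B : Set V}
    (hsep : ∀ x ∈ A \ B, ∀ y ∈ B \ A, ¬ G.Adj x y) {a b : ↥(A ∪ B)}
    (p : (G.induce (A ∪ B)).Walk a b) (ha : a.1 ∈ A) (hb : b.1 ∈ B) :
    ∃ z ∈ A ∩ B, G.dist a z + G.dist z b ≤ p.length := by
  induction p with
  | nil => exact ⟨_, ⟨ha, hb⟩, by simp⟩
  | @cons a c b hac q ih =>
    rw [Walk.length_cons]
    by_cases hc : c.1 ∈ A
    · obtain ⟨z, hz, hzq⟩ := ih hc hb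
      have hac' : G.dist a c = 1 := dist_eq_one_iff_adj.2 hac
      have := (hG a c).dist_triangle_left z
      exact ⟨z, hz, by omega⟩
    · have haB : a.1 ∈ B := by
        by_contra haB
        exact hsep a ⟨ha, haB⟩ c ⟨c.2.resolve_left hc, hc⟩ hac
      have := dist_map_le_length (Embedding.induce (A ∪ B)).toHom (q.cons hac)
      exact ⟨a, ⟨ha, haB⟩, by simpa using this⟩

lemma ExpansionFamily.exists_walk_length_le (hG : G.Preconnected) (hW : ExpansionFamily G W)
    (p q : {p : Fin m × V // p.2 ∈ W p.1}) :
    ∃ w : (expansionGraph G W).Walk p q,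
      w.length ≤ (⊤ : SimpleGraph (Fin m)).dist p.1.1 q.1.1 + G.dist p.1.2 q.1.2 := by
  obtain ⟨-, -, hsep, hiso, hiso₂⟩ := hW
  obtain ⟨⟨i, x⟩, hx⟩ := p
  obtain ⟨⟨j, y⟩, hy⟩ := q
  rcases eq_or_ne i j with rfl | hij
  · obtain ⟨w, hw⟩ := exists_layer_walk_length_eq hG (hiso i) hx hy
    exact ⟨w, by simp [hw]⟩
  · obtain ⟨g, hg⟩ := ((hiso₂ i j).preconnected_induce hG ⟨x, Or.inl hx⟩
      ⟨y, Or.inr hy⟩).exists_walk_length_eq_dist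
    rw [hiso₂] at hg
    obtain ⟨z, ⟨hzi, hzj⟩, hz⟩ := exists_mem_inter_dist_add_dist_le hG (hsep i j) g hx hy
    obtain ⟨w₁, hw₁⟩ := exists_layer_walk_length_eq hG (hiso i) hx hzi
    obtain ⟨w₂, hw₂⟩ := exists_layer_walk_length_eq hG (hiso j) hzj hy
    have hjump : (expansionGraph G W).Adj ⟨(i, z), hzi⟩ ⟨(j, z), hzj⟩ := Or.inr ⟨hij, rfl⟩
    refine ⟨w₁.append (w₂.cons hjump), ?_⟩
    simp only [Walk.length_append, Walk.length_cons, dist_top_of_ne hij] at hg hz hw₁ hw₂ ⊢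
    omega

end Expansion

section Product

variable {H : SimpleGraph V} {S : Set V} {m : ℕ}

def expansionSet (W : Fin m → Set S) : Set (Fin m × V) :=
  {p | ∃ h : p.2 ∈ S, ⟨p.2, h⟩ ∈ W p.1}

lemma mk_mem_expansionSet {W : Fin m → Set S} {i : Fin m} {x : V} :
    (i, x) ∈ expansionSet W ↔ x ∈ Subtype.val '' W i :=
  ⟨fun ⟨h, hx⟩ => ⟨⟨x, h⟩, hx, rfl⟩, fun ⟨a, ha, hax⟩ => hax ▸ ⟨a.2, ha⟩⟩

def expansionIso (H : SimpleGraph V) (W : Fin m → Set S) :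
    expansionGraph (H.induce S) W ≃g ((⊤ : SimpleGraph (Fin m)) □ H).induce (expansionSet W) where
  toFun p := ⟨(p.1.1, p.1.2.1), p.1.2.2, p.2⟩
  invFun q := ⟨(q.1.1, ⟨q.1.2, q.2.1⟩), q.2.2⟩
  left_inv _ := rfl
  right_inv _ := rfl
  map_rel_iff' := by
    rintro ⟨⟨i, x⟩, hx⟩ ⟨⟨j, y⟩, hy⟩
    simp only [Equiv.coe_fn_mk, comap_adj, Function.Embedding.subtype_apply, boxProd_adj,
      top_adj, expansionGraph, Subtype.ext_iff]
    tauto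

lemma isIsometricSubset_expansionSet (hH : H.Preconnected) (hS : IsIsometricSubset H S)
    {W : Fin m → Set S} (hW : ExpansionFamily (H.induce S) W) :
    IsIsometricSubset ((⊤ : SimpleGraph (Fin m)) □ H) (expansionSet W) := by
  refine isIsometricSubset_of_exists_walk fun u v => ?_
  let e := expansionIso H W
  obtain ⟨w, hw⟩ := hW.exists_walk_length_le (hS.preconnected_induce hH) (e.symm u) (e.symm v)
  refine ⟨(w.map e.toHom).copy (e.apply_symm_apply u) (e.apply_symm_apply v), ?_⟩
  rw [Walk.length_copy, Walk.length_map, dist_boxProd preconnected_top hH]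
  exact hw.trans_eq (by rw [hS]; rfl)

lemma isDaisySet_expansionSet [NeZero m] {r : V} (hH : H.Preconnected) {W : Fin m → Set S}
    (hW0 : W 0 = Set.univ) (hW : ∀ i, IsDaisySet H r (Subtype.val '' W i)) :
    IsDaisySet ((⊤ : SimpleGraph (Fin m)) □ H) (0, r) (expansionSet W) := by
  choose X hX using hW
  have hmem : ∀ i c, c ∈ Subtype.val '' W i ↔ ∃ v ∈ X i, c ∈ interval H r v := by
    intro i c
    simp [hX i, daisySet]
  refine ⟨{p | p.2 ∈ X p.1}, Set.ext fun ⟨j, c⟩ => ?_⟩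
  simp only [mk_mem_expansionSet, daisySet, Set.mem_iUnion, Set.mem_ofPred_eq,
    interval_boxProd preconnected_top hH, interval_top, Set.mem_prod, exists_prop, Prod.exists,
    Set.mem_insert_iff, Set.mem_singleton_iff]
  constructor
  · intro hc
    obtain ⟨v, hv, hcv⟩ := (hmem j c).1 hc
    exact ⟨j, v, hv, Or.inr rfl, hcv⟩
  · rintro ⟨i, v, hv, rfl | rfl, hcv⟩
    · obtain ⟨a, -, rfl⟩ := (hmem i c).2 ⟨v, hv, hcv⟩
      rw [hW0, Set.image_univ, Subtype.range_coe]
      exact a.2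
    · exact (hmem _ c).2 ⟨v, hv, hcv⟩

end Product

theorem daisy_peripheral_expansion_isometric_daisy_general
    (n : ℕ) (k : Fin n → ℕ) (hk : ∀ i, 0 < k i)
    (S : Set (∀ i, Fin (k i)))
    (hisom : IsIsometricSubset (hammingGraph k) S)
    (l : ℕ) (W : Fin (l + 1) → Set S)
    (hW0 : W 0 = Set.univ)
    (hexp : ExpansionFamily ((hammingGraph k).induce S) W)
    (hWdaisy : ∀ i, IsDaisySet (hammingGraph k) (hroot k hk) (Subtype.val '' W i)) :
    IsIsometricDaisyGraphOf (expansionGraph ((hammingGraph k).induce S) W)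
      ((⊤ : SimpleGraph (Fin (l + 1))) □ hammingGraph k) ((0 : Fin (l + 1)), hroot k hk) :=
  ⟨expansionSet W, isDaisySet_expansionSet hammingGraph_preconnected hW0 hWdaisy,
    isIsometricSubset_expansionSet hammingGraph_preconnected hisom hexp, ⟨expansionIso _ W⟩⟩

/-- If `G` is an isometric daisy graph (with vertex set `S`) of a Hamming
graph `H` with respect to the root `0^n`, then any daisy peripheral expansion of `G` relative
to sets `W 0 = V(G), W 1, …, W l` (each inducing a daisy graph of `H` w.r.t. `0^n`) is an
isometric daisy graph of `K_{l+1} □ H` with respect to `0^{n+1}`. -/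
theorem daisy_peripheral_expansion_isometric_daisy
    (n : ℕ) (k : Fin n → ℕ) (hk : ∀ i, 0 < k i)
    (S : Set (∀ i, Fin (k i)))
    (hdaisy : IsDaisySet (hammingGraph k) (hroot k hk) S)
    (hisom : IsIsometricSubset (hammingGraph k) S)
    (l : ℕ) (W : Fin (l + 1) → Set S)
    (hW0 : W 0 = Set.univ)
    (hexp : ExpansionFamily ((hammingGraph k).induce S) W)
    (hWdaisy : ∀ i, IsDaisySet (hammingGraph k) (hroot k hk) (Subtype.val '' W i)) :
    IsIsometricDaisyGraphOf (expansionGraph ((hammingGraph k).induce S) W)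
      ((⊤ : SimpleGraph (Fin (l + 1))) □ hammingGraph k) ((0 : Fin (l + 1)), hroot k hk) :=
  daisy_peripheral_expansion_isometric_daisy_general n k hk S hisom l W hW0 hexp hWdaisy

end Daisy
end
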